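/- arXiv:1111.3585 — 5 statements merged into one kernel-verified Lean document; each statement's English description precedes it below -/
import Mathlib

section
/- For m ≥ 3, define polynomials D_m in ℤ[t] by the recursion D_m = T_1·D_{m-1} − T_2²·D_{m-2}, where T_1 = 1 − t + t² − t³ and T_2 = t² − t, with initial values D_1 = T_1 and D_2 = T_1² − T_2². Then D_m = (1−t)^m·(1−t^{2m+2})/(1−t²) for all m ≥ 1; equivalently (1−t²)·D_m = (1−t)^m·(1−t^{2m+2}). -/
/-!
`(1 - t)^m (1 - t^(2m+2)) = (1 - t)^m - t² (t²(1 - t))^m` is a combination of the geometric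
sequences with ratios `1 - t` and `t²(1 - t)`. Their sum `(1 - t)(1 + t²)` is `T₁` and their product
`t²(1 - t)²` is `T₂²`, so the closed form obeys the recursion of `D`, as does `(1 - t²) D_m`;
the two sequences agree for `m = 1, 2`, hence for all `m ≥ 1`.
-/

open Polynomial

section LinearRecurrence

variable {R : Type*} [CommRing R]

theorem linear_combination_pow_recurrence (r s c d : R) (n : ℕ) :
    c * r ^ (n + 2) + d * s ^ (n + 2) =
      (r + s) * (c * r ^ (n + 1) + d * s ^ (n + 1)) - r * s * (c * r ^ n + d * s ^ n) := by
  ring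

theorem eq_of_recurrence_of_eq_one_of_eq_two {u v : ℕ → R} {a b : R}
    (hu : ∀ n, u (n + 3) = a * u (n + 2) - b * u (n + 1))
    (hv : ∀ n, v (n + 3) = a * v (n + 2) - b * v (n + 1))
    (h1 : u 1 = v 1) (h2 : u 2 = v 2) {m : ℕ} (hm : 1 ≤ m) : u m = v m := by
  have pair : ∀ n, u (n + 1) = v (n + 1) ∧ u (n + 2) = v (n + 2) := by
    intro n
    induction n with
    | zero => exact ⟨h1, h2⟩
    | succ n ih => exact ⟨ih.2, by rw [hu, hv, ih.1, ih.2]⟩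
  obtain ⟨n, rfl⟩ := Nat.exists_eq_add_of_le' hm
  exact (pair n).1

theorem one_sub_pow_mul_one_sub_pow_eq (t : R) (n : ℕ) :
    (1 - t) ^ n * (1 - t ^ (2 * n + 2)) = 1 * (1 - t) ^ n + (-t ^ 2) * (t ^ 2 * (1 - t)) ^ n := by
  rw [mul_pow, ← pow_mul]
  ring

theorem one_sub_pow_mul_one_sub_pow_recurrence (t : R) (n : ℕ) :
    (1 - t) ^ (n + 3) * (1 - t ^ (2 * (n + 3) + 2)) =
      (1 - t + t ^ 2 - t ^ 3) * ((1 - t) ^ (n + 2) * (1 - t ^ (2 * (n + 2) + 2))) -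
        (t ^ 2 - t) ^ 2 * ((1 - t) ^ (n + 1) * (1 - t ^ (2 * (n + 1) + 2))) := by
  simp only [one_sub_pow_mul_one_sub_pow_eq]
  calc 1 * (1 - t) ^ (n + 1 + 2) + (-t ^ 2) * (t ^ 2 * (1 - t)) ^ (n + 1 + 2)
      = ((1 - t) + t ^ 2 * (1 - t)) *
            (1 * (1 - t) ^ (n + 1 + 1) + (-t ^ 2) * (t ^ 2 * (1 - t)) ^ (n + 1 + 1)) -
          (1 - t) * (t ^ 2 * (1 - t)) *
            (1 * (1 - t) ^ (n + 1) + (-t ^ 2) * (t ^ 2 * (1 - t)) ^ (n + 1)) :=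
        linear_combination_pow_recurrence _ _ _ _ _
    _ = _ := by ring

end LinearRecurrence

/-- For the sequence `D` of polynomials over ℤ defined by
`D 1 = T₁`, `D 2 = T₁² − T₂²` and `D m = T₁·D (m−1) − T₂²·D (m−2)` for `m ≥ 3`,
where `T₁ = 1 − t + t² − t³` and `T₂ = t² − t`, one has
`(1 − t²)·D m = (1 − t)^m·(1 − t^{2m+2})` for all `m ≥ 1`. -/
theorem stmt0 (D : ℕ → Polynomial ℤ)
    (h1 : D 1 = 1 - X + X ^ 2 - X ^ 3)
    (h2 : D 2 = (1 - X + X ^ 2 - X ^ 3) ^ 2 - (X ^ 2 - X) ^ 2)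
    (hrec : ∀ m, 3 ≤ m →
      D m = (1 - X + X ^ 2 - X ^ 3) * D (m - 1) - (X ^ 2 - X) ^ 2 * D (m - 2)) :
    ∀ m, 1 ≤ m → (1 - X ^ 2) * D m = (1 - X) ^ m * (1 - X ^ (2 * m + 2)) := by
  intro m hm
  refine eq_of_recurrence_of_eq_one_of_eq_two (u := fun n ↦ (1 - X ^ 2) * D n)
    (v := fun n ↦ (1 - X) ^ n * (1 - X ^ (2 * n + 2)))
    (fun n ↦ ?_) (one_sub_pow_mul_one_sub_pow_recurrence X) (by simp only [h1]; ring)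
    (by simp only [h2]; ring) hm
  have hD : D (n + 3) = (1 - X + X ^ 2 - X ^ 3) * D (n + 2) - (X ^ 2 - X) ^ 2 * D (n + 1) :=
    hrec (n + 3) (by omega)
  simp only [hD]
  ring
end

section
/- With T_2 = t² − t and D_m = (1−t)^m·(1−t^{2m+2})/(1−t²), define D'_m by D'_1 = 1 − t³ (appropriate initial data) and the recursion D'_m = (1−t³)·D_{m-1} − T_2²·D_{m-2} for m ≥ 3. Then D'_m = (1−t)^{m−1}·(1−t^{2m+1}). -/
open Polynomial

/-! Multiplying the recursion by `1 - t²` replaces `D (m-1)` and `D (m-2)` by their closed forms,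
and the claim becomes a polynomial identity; `1 - t²` can then be cancelled since `ℤ[t]` is a
domain. -/

lemma one_sub_sq_mul_recursion {R : Type*} [CommRing R] (t : R) (k : ℕ) :
    (1 - t ^ 3) * ((1 - t) ^ (k + 2) * (1 - t ^ (2 * (k + 2) + 2)))
      - (t ^ 2 - t) ^ 2 * ((1 - t) ^ (k + 1) * (1 - t ^ (2 * (k + 1) + 2)))
      = (1 - t ^ 2) * ((1 - t) ^ (k + 2) * (1 - t ^ (2 * (k + 3) + 1))) := by
  ring

lemma one_sub_X_sq_ne_zero {R : Type*} [Ring R] [Nontrivial R] : (1 - X ^ 2 : R[X]) ≠ 0 := by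
  intro h
  simpa using congrArg (coeff · 0) h

lemma recursion_eq_of_mul_one_sub_X_sq {R : Type*} [CommRing R] [IsDomain R] (D : ℕ → R[X])
    (k : ℕ) (hD₁ : (1 - X ^ 2) * D (k + 1) = (1 - X) ^ (k + 1) * (1 - X ^ (2 * (k + 1) + 2)))
    (hD₂ : (1 - X ^ 2) * D (k + 2) = (1 - X) ^ (k + 2) * (1 - X ^ (2 * (k + 2) + 2))) :
    (1 - X ^ 3) * D (k + 2) - (X ^ 2 - X) ^ 2 * D (k + 1)
      = (1 - X) ^ (k + 2) * (1 - X ^ (2 * (k + 3) + 1)) := by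
  refine mul_left_cancel₀ one_sub_X_sq_ne_zero ?_
  calc (1 - X ^ 2) * ((1 - X ^ 3) * D (k + 2) - (X ^ 2 - X) ^ 2 * D (k + 1))
      = (1 - X ^ 3) * ((1 - X ^ 2) * D (k + 2))
          - (X ^ 2 - X) ^ 2 * ((1 - X ^ 2) * D (k + 1)) := by ring
    _ = _ := by rw [hD₁, hD₂, one_sub_sq_mul_recursion]

/-- With `T₂ = t² − t` and `D m = (1−t)^m (1−t^{2m+2})/(1−t²)`
(encoded by `(1−t²)·D m = (1−t)^m (1−t^{2m+2})`), if `D'` satisfies the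
initial values `D' 1 = 1 − t³`, `D' 2 = (1−t)(1−t⁵)` and the recursion
`D' m = (1−t³)·D (m−1) − T₂²·D (m−2)` for `m ≥ 3`, then
`D' m = (1−t)^{m−1}·(1−t^{2m+1})` for all `m ≥ 1`. -/
theorem stmt1 (D D' : ℕ → Polynomial ℤ)
    (hD : ∀ m, 1 ≤ m → (1 - X ^ 2) * D m = (1 - X) ^ m * (1 - X ^ (2 * m + 2)))
    (h1 : D' 1 = 1 - X ^ 3)
    (h2 : D' 2 = (1 - X) * (1 - X ^ 5))
    (hrec : ∀ m, 3 ≤ m →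
      D' m = (1 - X ^ 3) * D (m - 1) - (X ^ 2 - X) ^ 2 * D (m - 2)) :
    ∀ m, 1 ≤ m → D' m = (1 - X) ^ (m - 1) * (1 - X ^ (2 * m + 1)) := by
  rintro (_ | _ | _ | k) hm
  · omega
  · simpa using h1
  · simpa using h2
  · rw [hrec (k + 3) (by omega)]
    exact recursion_eq_of_mul_one_sub_X_sq D k (hD (k + 1) (by omega)) (hD (k + 2) (by omega))
end

section
/- Let A be a Frobenius algebra with Nakayama automorphism β of order dividing 3, and let {w_j}, {w_j*} be dual bases with respect to the form (x,y)=f(xy), (x,y)=(y,β(x)). Define μ'₁₂: A → A by μ'₁₂(x) = Σ_j w_j* β(x) β(w_j). Then (μ'₁₂(x), y) = (x, μ'₁₂(β(y))) for all x, y ∈ A; i.e. the adjoint of μ'₁₂ with respect to the form equals μ'₁₂ ∘ β. -/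
/-!
The Casimir element `∑ⱼ wⱼ ⊗ wⱼ*` does not depend on the pair of dual bases. Since
`f (wⱼ* β(wₖ)) = f (wₖ wⱼ*)`, the families `{wⱼ*}`, `{β(wⱼ)}` are again dual, so
`∑ⱼ wⱼ ⊗ z wⱼ* = ∑ⱼ wⱼ* ⊗ z β(wⱼ)` for every `z`. With `z = β² y`, moving `x wⱼ z` to the
right through the Nakayama twist turns `f (μ'₁₂(x) y)` into `∑ⱼ f (x wⱼ z wⱼ*)`, and the
Casimir swap turns this into `∑ⱼ f (x wⱼ* z β(wⱼ)) = f (x μ'₁₂(β y))`.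
-/

section DualPair

variable {R M M' N ι κ : Type*} [CommSemiring R]
  [AddCommMonoid M] [Module R M] [AddCommMonoid M'] [Module R M']
  [AddCommMonoid N] [Module R N] [DecidableEq ι] [DecidableEq κ]

def IsDualPair (B : M →ₗ[R] M' →ₗ[R] R) (u : ι → M) (v : ι → M') : Prop :=
  ∀ j k, B (u j) (v k) = if j = k then 1 else 0

namespace IsDualPair

variable {B : M →ₗ[R] M' →ₗ[R] R}

theorem flip {u : ι → M} {v : ι → M'} (h : IsDualPair B u v) : IsDualPair B.flip v u :=
  fun j k => by rw [LinearMap.flip_apply, h]; exact if_congr eq_comm rfl rfl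

theorem apply_dual_eq_repr {b : Module.Basis ι R M} {d : ι → M'} (h : IsDualPair B b d)
    (a : M) (k : ι) : B a (d k) = b.repr a k := by
  have hcoord : B.flip (d k) = b.coord k :=
    b.ext fun j => by simp [h j k, Finsupp.single_apply]
  exact LinearMap.congr_fun hcoord a

theorem sum_smul_eq [Fintype ι] {b : Module.Basis ι R M} {d : ι → M'} (h : IsDualPair B b d)
    (a : M) : ∑ k, B a (d k) • b k = a := by
  simpa only [h.apply_dual_eq_repr] using b.sum_repr a

theorem sum_apply_eq_sum_apply [Fintype ι] [Fintype κ] (φ : M →ₗ[R] M' →ₗ[R] N)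
    {b : Module.Basis ι R M} {d : ι → M'} {e : κ → M} {c : Module.Basis κ R M'}
    (hbd : IsDualPair B b d) (hec : IsDualPair B e c) :
    ∑ k, φ (b k) (d k) = ∑ j, φ (e j) (c j) := by
  calc ∑ k, φ (b k) (d k) = ∑ k, φ (b k) (∑ j, B (e j) (d k) • c j) := by
        simp_rw [← LinearMap.flip_apply (f := B), hec.flip.sum_smul_eq]
    _ = ∑ j, φ (∑ k, B (e j) (d k) • b k) (c j) := by
        simp only [map_sum, map_smul, LinearMap.sum_apply, LinearMap.smul_apply]
        exact Finset.sum_comm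
    _ = ∑ j, φ (e j) (c j) := by simp_rw [hbd.sum_smul_eq]

end IsDualPair

end DualPair

theorem stmt5_general {A : Type*} [Ring A] [Algebra ℂ A]
    (f : A →ₗ[ℂ] ℂ)
    (β : A ≃ₐ[ℂ] A) (hβ : ∀ x y : A, f (x * y) = f (y * β x))
    (hβ3 : ∀ x : A, β (β (β x)) = x)
    {ι : Type*} [Fintype ι] [DecidableEq ι] (b : Module.Basis ι ℂ A) (w wd : ι → A)
    (hw : ∀ j, w j = b j)
    (hdual : ∀ j k, f (w j * wd k) = if j = k then 1 else 0) :
    ∀ x y : A,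
      f ((∑ j, wd j * β x * β (w j)) * y)
        = f (x * ∑ j, wd j * β (β y) * β (w j)) := by
  intro x y
  set z := β (β y)
  let B : A →ₗ[ℂ] A →ₗ[ℂ] ℂ := (LinearMap.mul ℂ A).compr₂ f
  let φ : A →ₗ[ℂ] A →ₗ[ℂ] ℂ :=
    ((LinearMap.mul ℂ A).compl₁₂ (LinearMap.mulRight ℂ z) LinearMap.id).compr₂
      (f ∘ₗ LinearMap.mulLeft ℂ x)
  have hbd : IsDualPair B b wd := fun j k => by simpa [B, hw] using hdual j k
  have hec : IsDualPair B wd (b.map β.toLinearEquiv) := fun j k => by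
    simpa [B, ← hw, ← hβ, eq_comm] using hdual k j
  have twist : ∀ j, f (x * (w j * z * wd j)) = f (wd j * β x * β (w j) * y) := fun j => by
    rw [← mul_assoc, ← mul_assoc, hβ, map_mul β, map_mul β, hβ3]
    simp only [mul_assoc]
  calc f ((∑ j, wd j * β x * β (w j)) * y)
      = ∑ j, f (x * (w j * z * wd j)) := by
        rw [Finset.sum_mul, map_sum]
        exact Finset.sum_congr rfl fun j _ => (twist j).symm
    _ = ∑ j, f (x * (wd j * z * β (w j))) := by
        simpa [φ, hw] using hbd.sum_apply_eq_sum_apply φ hec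
    _ = f (x * ∑ j, wd j * z * β (w j)) := by rw [Finset.mul_sum, map_sum]

/-- Let `A` be a finite-dimensional Frobenius algebra over ℂ with
form `(x,y) = f(xy)`, Nakayama automorphism `β` with `(x,y) = (y, β x)` and
`β³ = id`, and dual bases `{w j}`, `{wd j}`. Define
`μ'₁₂(x) = Σ_j wd j · β x · β (w j)`. Then `(μ'₁₂ x, y) = (x, μ'₁₂ (β y))`
for all `x y : A`, i.e. the adjoint of `μ'₁₂` is `μ'₁₂ ∘ β`. -/
theorem stmt5 {A : Type*} [Ring A] [Algebra ℂ A] [FiniteDimensional ℂ A]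
    (f : A →ₗ[ℂ] ℂ) (hnd : ∀ x : A, (∀ y : A, f (x * y) = 0) → x = 0)
    (β : A ≃ₐ[ℂ] A) (hβ : ∀ x y : A, f (x * y) = f (y * β x))
    (hβ3 : ∀ x : A, β (β (β x)) = x)
    {ι : Type*} [Fintype ι] [DecidableEq ι] (b : Module.Basis ι ℂ A) (w wd : ι → A)
    (hw : ∀ j, w j = b j)
    (hdual : ∀ j k, f (w j * wd k) = if j = k then 1 else 0) :
    ∀ x y : A,
      f ((∑ j, wd j * β x * β (w j)) * y)
        = f (x * ∑ j, wd j * β (β y) * β (w j)) :=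
  stmt5_general f β hβ hβ3 b w wd hw hdual
end

section
/- The rational function χ(t) := (1/(1−t^{2m+2})) · (m t + (m−1)t² + m t³ + (m−1)t⁴ + ⋯ + (m−1)t^{2m} + m t^{2m+1}) (coefficients alternating m, m−1, starting and ending with m), written χ(t) = Σ_k a_k t^k, satisfies the product identity ∏_{k≥1}(1−t^k)^{−a_k} = ∏_{s≥1} (1−t^{2s})(1−t^{(2m+2)s})^{m−1}/(1−t^s)^m as formal power series. In particular the coefficients a_k of χ(t) are periodic in k with period 2m+2, with a_k = m for k odd, a_k = m−1 for k even and not divisible by 2m+2, and a_{(2m+2)j} = 0. -/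
open PowerSeries


lemma aux_unit (k : ℕ) (hk : k ≠ 0) :
    (1 - (X : ℚ⟦X⟧) ^ k) * (1 - (X : ℚ⟦X⟧) ^ k)⁻¹ = 1 :=
  PowerSeries.mul_inv_cancel _ (by simp [hk])

lemma aux_split (k p q : ℕ) (hk : k ≠ 0) :
    ((1 - (X : ℚ⟦X⟧) ^ k)⁻¹) ^ p
      = ((1 - (X : ℚ⟦X⟧) ^ k)⁻¹) ^ (p + q) * (1 - (X : ℚ⟦X⟧) ^ k) ^ q := by
  have h : (1 - (X : ℚ⟦X⟧) ^ k)⁻¹ * (1 - (X : ℚ⟦X⟧) ^ k) = 1 := by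
    rw [mul_comm]; exact aux_unit k hk
  rw [pow_add, mul_assoc, ← mul_pow, h, one_pow, mul_one]

lemma prod_sub_one_dvd {ι : Type*} (s : Finset ι) (f : ι → ℚ⟦X⟧) (d : ℚ⟦X⟧)
    (h : ∀ i ∈ s, d ∣ f i - 1) : d ∣ (∏ i ∈ s, f i) - 1 := by
  classical
  induction s using Finset.cons_induction with
  | empty => simp
  | cons a s ha ih =>
    rw [Finset.prod_cons]
    have h1 := h a (Finset.mem_cons_self a s)
    have h2 := ih fun i hi => h i (Finset.mem_cons_of_mem hi)
    have key : f a * ∏ i ∈ s, f i - 1 = f a * ((∏ i ∈ s, f i) - 1) + (f a - 1) := by ring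
    rw [key]
    exact dvd_add (h2.mul_left _) h1

lemma coeff_mul_unit (n : ℕ) (f r : ℚ⟦X⟧) (h : (X : ℚ⟦X⟧) ^ (n + 1) ∣ r - 1) :
    PowerSeries.coeff (R := ℚ) n (f * r) = PowerSeries.coeff (R := ℚ) n f := by
  obtain ⟨q, hq⟩ := h
  have hr : r = 1 + X ^ (n + 1) * q := by linear_combination hq
  have hfr : f * r = f + X ^ (n + 1) * (f * q) := by rw [hr]; ring
  rw [hfr, map_add]
  have h0 : PowerSeries.coeff (R := ℚ) n ((X : ℚ⟦X⟧) ^ (n + 1) * (f * q)) = 0 :=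
    PowerSeries.X_pow_dvd_iff.mp (Dvd.intro _ rfl) n (Nat.lt_succ_self n)
  rw [h0, add_zero]

lemma key_reindex (n d e : ℕ) (hd : d ≠ 0) :
    ∃ r : ℚ⟦X⟧, (X : ℚ⟦X⟧) ^ (n + 1) ∣ r - 1 ∧
      ∏ s ∈ Finset.Icc 1 n, (1 - (X : ℚ⟦X⟧) ^ (d * s)) ^ e
        = (∏ k ∈ Finset.Icc 1 n, (1 - (X : ℚ⟦X⟧) ^ k) ^ (if d ∣ k then e else 0)) * r := by
  classical
  refine ⟨∏ s ∈ Finset.Icc 1 n, if d * s ≤ n then 1 else (1 - (X : ℚ⟦X⟧) ^ (d * s)) ^ e, ?_, ?_⟩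
  · apply prod_sub_one_dvd
    intro s hs
    by_cases hsn : d * s ≤ n
    · simp [hsn]
    · rw [if_neg hsn]
      have h1 : (X : ℚ⟦X⟧) ^ (n + 1) ∣ (X : ℚ⟦X⟧) ^ (d * s) :=
        pow_dvd_pow _ (by omega)
      have h2 : (X : ℚ⟦X⟧) ^ (d * s) ∣ (1 - (X : ℚ⟦X⟧) ^ (d * s)) ^ e - 1 := by
        have h3 := sub_dvd_pow_sub_pow (1 - (X : ℚ⟦X⟧) ^ (d * s)) 1 e
        simp only [one_pow] at h3
        have heq : (1 - (X : ℚ⟦X⟧) ^ (d * s)) - 1 = -(X : ℚ⟦X⟧) ^ (d * s) := by ring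
        rw [heq] at h3
        exact (dvd_neg.mpr dvd_rfl).trans h3
      exact h1.trans h2
  · have hsplit : ∀ s ∈ Finset.Icc 1 n, (1 - (X : ℚ⟦X⟧) ^ (d * s)) ^ e
        = (if d * s ≤ n then (1 - (X : ℚ⟦X⟧) ^ (d * s)) ^ e else 1) *
          (if d * s ≤ n then 1 else (1 - (X : ℚ⟦X⟧) ^ (d * s)) ^ e) := by
      intro s _; split_ifs <;> simp
    rw [Finset.prod_congr rfl hsplit, Finset.prod_mul_distrib]
    congr 1
    have hr : ∀ k ∈ Finset.Icc 1 n, (1 - (X : ℚ⟦X⟧) ^ k) ^ (if d ∣ k then e else 0)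
        = if d ∣ k then (1 - (X : ℚ⟦X⟧) ^ k) ^ e else 1 := by
      intro k _; split_ifs <;> simp
    rw [Finset.prod_congr rfl hr, ← Finset.prod_filter, ← Finset.prod_filter]
    refine Finset.prod_nbij' (fun s => d * s) (fun k => k / d) ?_ ?_ ?_ ?_ ?_
    · intro s hs
      simp only [Finset.mem_filter, Finset.mem_Icc] at hs ⊢
      refine ⟨⟨?_, hs.2⟩, Dvd.intro _ rfl⟩
      have := hs.1.1
      nlinarith [Nat.one_le_iff_ne_zero.mpr hd]
    · intro k hk
      simp only [Finset.mem_filter, Finset.mem_Icc] at hk ⊢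
      obtain ⟨⟨hk1, hk2⟩, t, ht⟩ := hk
      subst ht
      have ht1 : 1 ≤ t := Nat.pos_of_ne_zero (by rintro rfl; simp at hk1)
      rw [Nat.mul_div_cancel_left t (Nat.pos_of_ne_zero hd)]
      refine ⟨⟨ht1, ?_⟩, hk2⟩
      calc t ≤ d * t := Nat.le_mul_of_pos_left t (Nat.pos_of_ne_zero hd)
        _ ≤ n := hk2
    · intro s _; exact Nat.mul_div_cancel_left s (Nat.pos_of_ne_zero hd)
    · intro k hk
      simp only [Finset.mem_filter] at hk
      exact Nat.mul_div_cancel' hk.2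
    · intro s _; rfl

lemma exp_arith (m k : ℕ) (hm : 1 ≤ m) (hk : k ≠ 0) :
    (if (2 * m + 2) ∣ k then 0 else if k % 2 = 1 then m else m - 1)
      + ((if 2 ∣ k then 1 else 0) + (if (2 * m + 2) ∣ k then m - 1 else 0)) = m := by
  by_cases h1 : (2 * m + 2) ∣ k
  · have h2 : 2 ∣ k := dvd_trans ⟨m + 1, by ring⟩ h1
    simp only [if_pos h1, if_pos h2]
    omega
  · by_cases h2 : 2 ∣ k
    · have h3 : ¬ k % 2 = 1 := by omega
      simp only [if_neg h1, if_neg h3, if_pos h2]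
      omega
    · have h3 : k % 2 = 1 := by omega
      simp only [if_neg h1, if_pos h3, if_neg h2]
      omega

lemma part1 (m : ℕ) (hm : 1 ≤ m) :
    (PowerSeries.mk fun k => ((if (2 * m + 2) ∣ k then 0 else if k % 2 = 1 then m else m - 1 : ℕ) : ℚ))
        * (1 - (X : ℚ⟦X⟧) ^ (2 * m + 2))
      = ∑ j ∈ Finset.Icc 1 (2 * m + 1),
          (if j % 2 = 1 then (m : ℚ) else (m : ℚ) - 1) • (X : ℚ⟦X⟧) ^ j := by
  ext n
  rw [mul_sub, mul_one, map_sub, map_sum]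
  simp only [coeff_mk, PowerSeries.coeff_mul_X_pow', coeff_smul, PowerSeries.coeff_X_pow,
    smul_eq_mul, mul_ite, mul_one, mul_zero]
  rw [Finset.sum_ite_eq (Finset.Icc 1 (2 * m + 1)) n
    (fun j => if j % 2 = 1 then (m : ℚ) else (m : ℚ) - 1)]
  by_cases hd : (2 * m + 2) ∣ n
  · rcases Nat.eq_zero_or_pos n with h0 | h0
    · subst h0
      rw [if_pos hd, if_neg (by omega),
        if_neg (c := (0 : ℕ) ∈ Finset.Icc 1 (2 * m + 1)) (by simp)]
      simp
    · have hn : 2 * m + 2 ≤ n := Nat.le_of_dvd h0 hd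
      have hd2 : (2 * m + 2) ∣ (n - (2 * m + 2)) := Nat.dvd_sub hd dvd_rfl
      rw [if_pos hd, if_pos hn, if_pos hd2,
        if_neg (c := n ∈ Finset.Icc 1 (2 * m + 1)) (by rw [Finset.mem_Icc]; omega)]
      simp
  · by_cases hn : 2 * m + 2 ≤ n
    · have hd2 : ¬ (2 * m + 2) ∣ (n - (2 * m + 2)) := by
        intro h
        apply hd
        have hrw : n = (n - (2 * m + 2)) + (2 * m + 2) := by omega
        rw [hrw]
        exact dvd_add h dvd_rfl
      have hpar : (n - (2 * m + 2)) % 2 = n % 2 := by omega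
      rw [if_neg hd, if_pos hn, if_neg hd2, hpar,
        if_neg (c := n ∈ Finset.Icc 1 (2 * m + 1)) (by rw [Finset.mem_Icc]; omega)]
      ring
    · have h1 : 1 ≤ n := Nat.pos_of_ne_zero (by rintro rfl; exact hd (dvd_zero _))
      rw [if_neg hd, if_neg hn, sub_zero,
        if_pos (c := n ∈ Finset.Icc 1 (2 * m + 1)) (by rw [Finset.mem_Icc]; omega)]
      split_ifs with hp
      · rfl
      · rw [Nat.cast_sub hm, Nat.cast_one]
lemma part2 (m : ℕ) (hm : 1 ≤ m) (n : ℕ) :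
    PowerSeries.coeff (R := ℚ) n
        (∏ k ∈ Finset.Icc 1 n, ((1 - (X : ℚ⟦X⟧) ^ k)⁻¹) ^
          (if (2 * m + 2) ∣ k then 0 else if k % 2 = 1 then m else m - 1))
      = PowerSeries.coeff (R := ℚ) n
        (∏ s ∈ Finset.Icc 1 n,
          ((1 - (X : ℚ⟦X⟧) ^ (2 * s)) *
            (1 - (X : ℚ⟦X⟧) ^ ((2 * m + 2) * s)) ^ (m - 1) *
            ((1 - (X : ℚ⟦X⟧) ^ s)⁻¹) ^ m)) := by
  classical
  set A : ℚ⟦X⟧ := ∏ k ∈ Finset.Icc 1 n, ((1 - (X : ℚ⟦X⟧) ^ k)⁻¹) ^ m with hA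
  set B : ℚ⟦X⟧ := ∏ k ∈ Finset.Icc 1 n, (1 - (X : ℚ⟦X⟧) ^ k) ^ (if 2 ∣ k then 1 else 0) with hB
  set C : ℚ⟦X⟧ := ∏ k ∈ Finset.Icc 1 n,
      (1 - (X : ℚ⟦X⟧) ^ k) ^ (if (2 * m + 2) ∣ k then m - 1 else 0) with hC
  have hL : (∏ k ∈ Finset.Icc 1 n, ((1 - (X : ℚ⟦X⟧) ^ k)⁻¹) ^
        (if (2 * m + 2) ∣ k then 0 else if k % 2 = 1 then m else m - 1)) = A * (B * C) := by
    rw [hA, hB, hC, ← Finset.prod_mul_distrib, ← Finset.prod_mul_distrib]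
    apply Finset.prod_congr rfl
    intro k hk
    have hk0 : k ≠ 0 := by
      rw [Finset.mem_Icc] at hk; omega
    have harith := exp_arith m k hm hk0
    rw [aux_split k _ ((if 2 ∣ k then 1 else 0) + (if (2 * m + 2) ∣ k then m - 1 else 0)) hk0,
      harith, pow_add]
  have hR : (∏ s ∈ Finset.Icc 1 n,
        ((1 - (X : ℚ⟦X⟧) ^ (2 * s)) *
          (1 - (X : ℚ⟦X⟧) ^ ((2 * m + 2) * s)) ^ (m - 1) *
          ((1 - (X : ℚ⟦X⟧) ^ s)⁻¹) ^ m))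
      = (∏ s ∈ Finset.Icc 1 n, (1 - (X : ℚ⟦X⟧) ^ (2 * s))) *
        (∏ s ∈ Finset.Icc 1 n, (1 - (X : ℚ⟦X⟧) ^ ((2 * m + 2) * s)) ^ (m - 1)) * A := by
    rw [Finset.prod_mul_distrib, Finset.prod_mul_distrib, hA]
  obtain ⟨r₁, hr₁, hU⟩ := key_reindex n 2 1 two_ne_zero
  obtain ⟨r₂, hr₂, hV⟩ := key_reindex n (2 * m + 2) (m - 1) (by omega)
  simp only [pow_one] at hU
  rw [hL, hR, hU, hV, ← hB, ← hC]
  have hprod : B * r₁ * (C * r₂) * A = A * (B * C) * (r₁ * r₂) := by ring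
  rw [hprod]
  have hdvd : (X : ℚ⟦X⟧) ^ (n + 1) ∣ r₁ * r₂ - 1 := by
    have hsplit : r₁ * r₂ - 1 = r₁ * (r₂ - 1) + (r₁ - 1) := by ring
    rw [hsplit]
    exact dvd_add (hr₂.mul_left r₁) hr₁
  exact (coeff_mul_unit n (A * (B * C)) (r₁ * r₂) hdvd).symm


/-- Let `a k` be the coefficients of
`χ(t) = (m t + (m−1)t² + m t³ + ⋯ + (m−1)t^{2m} + m t^{2m+1})/(1−t^{2m+2})`,
namely `a k = 0` if `(2m+2) ∣ k`, `a k = m` for `k` odd and `a k = m − 1` for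
`k` even otherwise (periodic of period `2m+2`). Then
`∏_{k≥1} (1−t^k)^{−a k} = ∏_{s≥1} (1−t^{2s})(1−t^{(2m+2)s})^{m−1}/(1−t^s)^m`
as formal power series over ℚ, stated coefficientwise via truncated products
(factors with index `> n` do not affect the coefficient of `t^n`). -/
theorem stmt9 (m : ℕ) (hm : 1 ≤ m) :
    let a : ℕ → ℕ := fun k =>
      if (2 * m + 2) ∣ k then 0 else if k % 2 = 1 then m else m - 1
    ((PowerSeries.mk fun k => (a k : ℚ)) * (1 - (X : ℚ⟦X⟧) ^ (2 * m + 2))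
        = ∑ j ∈ Finset.Icc 1 (2 * m + 1),
            (if j % 2 = 1 then (m : ℚ) else (m : ℚ) - 1) • (X : ℚ⟦X⟧) ^ j) ∧
    (∀ n : ℕ,
      PowerSeries.coeff (R := ℚ) n
          (∏ k ∈ Finset.Icc 1 n, ((1 - (X : ℚ⟦X⟧) ^ k)⁻¹) ^ (a k))
        = PowerSeries.coeff (R := ℚ) n
          (∏ s ∈ Finset.Icc 1 n,
            ((1 - (X : ℚ⟦X⟧) ^ (2 * s)) *
              (1 - (X : ℚ⟦X⟧) ^ ((2 * m + 2) * s)) ^ (m - 1) *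
              ((1 - (X : ℚ⟦X⟧) ^ s)⁻¹) ^ m))) := by
  intro a
  exact ⟨part1 m hm, fun n => part2 m hm n⟩
end

section
/- For the graph ℰ^{(8)*}: the identity det(H_A(t)) = (1−t²)(1−t⁴)(1−t⁸)²/(1−t)² implies that the formal power series expansion of (2t+t²+2t³+2t⁵+t⁶+2t⁷−2t⁸)/(1−t⁸) satisfies the Euler product relation ∏_{k≥1}(1−t^k)^{−a_k} = ∏_{s≥1} (1−t^{2s})(1−t^{4s})(1−t^{8s})²/(1−t^s)², where a_k are the coefficients of the left series. In particular, the coefficient sequence (a_k) is periodic with period 8: (a₁,…,a₈) = (2,1,2,0,2,1,2,−2). -/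
/-!
The coefficients of `χ` are 8-periodic from index 1 on and its constant term is `0`, so
`χ(t)(1 - t⁸)` is the truncation of `χ` at degree 8.

For the product identity, multiply both truncated products by the unit `∏_{k ≤ n} (1 - t^k)²`.
Since `a k = 2 - [2 ∣ k] - [4 ∣ k]` when `8 ∤ k`, the `k`-th factor on the left becomes
`(1 - t^k)^([2 ∣ k] + [4 ∣ k] + 2 [8 ∣ k])`, and the `s`-th factor on the right becomes
`(1 - t^{2s})(1 - t^{4s})(1 - t^{8s})²`. Modulo `t^(n+1)` every factor `1 - t^{ds}` with
`ds > n` is `1`, so `∏_{s ≤ n} (1 - t^{ds}) ≡ ∏_{k ≤ n, d ∣ k} (1 - t^k)` and the two sides agree.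
-/

open PowerSeries Finset

section
variable {R : Type*} [CommRing R]

theorem mk_mul_one_sub_X_pow {f : ℕ → R} {p : ℕ} (h0 : f 0 = 0)
    (hf : ∀ k, 1 ≤ k → f (k + p) = f k) :
    mk f * (1 - X ^ p) = (trunc (p + 1) (mk f) : R⟦X⟧) := by
  ext n
  rw [mul_sub, mul_one, map_sub, coeff_mul_X_pow', Polynomial.coeff_coe, coeff_trunc,
    coeff_mk]
  split_ifs with hpn hnp hnp
  · rw [show n = p by omega, Nat.sub_self, coeff_mk, h0, sub_zero]
  · rw [coeff_mk, ← hf (n - p) (by omega), Nat.sub_add_cancel hpn, sub_self]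
  · rw [sub_zero]
  · omega

theorem isUnit_one_sub_X_pow {k : ℕ} (hk : k ≠ 0) : IsUnit (1 - X ^ k : R⟦X⟧) := by
  simp [isUnit_iff_constantCoeff, zero_pow hk]

theorem coeff_eq_of_mk_span_X_pow_eq {n : ℕ} {f g : R⟦X⟧}
    (h : Ideal.Quotient.mk (Ideal.span {X ^ (n + 1)}) f =
      Ideal.Quotient.mk (Ideal.span {X ^ (n + 1)}) g) :
    coeff n f = coeff n g := by
  rw [Ideal.Quotient.eq, Ideal.mem_span_singleton] at h
  exact sub_eq_zero.mp <| (map_sub (coeff n) f g) ▸ X_pow_dvd_iff.mp h n n.lt_succ_self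

theorem mk_span_X_pow_one_sub_X_pow {n k : ℕ} (hk : n < k) :
    Ideal.Quotient.mk (Ideal.span {X ^ (n + 1)}) (1 - X ^ k : R⟦X⟧) = 1 := by
  rw [map_sub, map_one, sub_eq_self, Ideal.Quotient.eq_zero_iff_mem, Ideal.mem_span_singleton]
  exact pow_dvd_pow X hk

theorem mk_span_X_pow_prod_Icc_mul_left_eq_prod_filter_dvd {n d : ℕ} (hd : 0 < d) (f : ℕ → R⟦X⟧)
    (hf : ∀ k, n < k → Ideal.Quotient.mk (Ideal.span {X ^ (n + 1)}) (f k) = 1) :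
    Ideal.Quotient.mk (Ideal.span {X ^ (n + 1)}) (∏ s ∈ Icc 1 n, f (d * s)) =
      Ideal.Quotient.mk (Ideal.span {X ^ (n + 1)}) (∏ k ∈ Icc 1 n with d ∣ k, f k) := by
  rw [map_prod, map_prod, ← prod_filter_of_ne (p := fun s => d * s ≤ n)
    fun s _ hs => not_lt.mp fun h => hs (hf _ h)]
  refine prod_nbij' (d * ·) (· / d) ?_ ?_ ?_ ?_ fun _ _ => rfl
  · simp only [mem_filter, mem_Icc]
    rintro s ⟨⟨hs, -⟩, hsn⟩
    exact ⟨⟨Nat.one_le_iff_ne_zero.mpr (by positivity), hsn⟩, dvd_mul_right d s⟩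
  · simp only [mem_filter, mem_Icc]
    rintro k ⟨⟨hk, hkn⟩, hdk⟩
    rw [Nat.mul_div_cancel' hdk]
    exact ⟨⟨Nat.div_pos (Nat.le_of_dvd hk hdk) hd, (Nat.div_le_self k d).trans hkn⟩, hkn⟩
  · intro s _
    exact Nat.mul_div_cancel_left s hd
  · intro k hk
    exact Nat.mul_div_cancel' (mem_filter.mp hk).2

end

def chiCoeff (k : ℕ) : ℤ :=
  if k % 8 = 0 then -2 else if k % 2 = 1 then 2 else if k % 8 = 2 ∨ k % 8 = 6 then 1 else 0

theorem chiCoeff_add_eight (k : ℕ) : chiCoeff (k + 8) = chiCoeff k := by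
  simp only [chiCoeff, Nat.add_mod_right, (by omega : (k + 8) % 2 = k % 2)]

theorem trunc_mk_chiCoeff :
    ((trunc 9 (mk fun k => if k = 0 then (0 : ℚ) else (chiCoeff k : ℚ)) : ℚ⟦X⟧)
      = 2 * X + X ^ 2 + 2 * X ^ 3 + 2 * X ^ 5 + X ^ 6 + 2 * X ^ 7 - 2 * X ^ 8) := by
  simp [trunc_apply, sum_range_succ, chiCoeff, Polynomial.coe_monomial,
    monomial_eq_C_mul_X_pow, map_ofNat C]
  ring

theorem chi_lhs_factor_mul_sq {k : ℕ} (hk : k ≠ 0) :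
    (if 8 ∣ k then (1 - X ^ k) ^ 2 else ((1 - X ^ k)⁻¹) ^ (chiCoeff k).toNat) *
        (1 - X ^ k : ℚ⟦X⟧) ^ 2 =
      (if 2 ∣ k then 1 - X ^ k else 1) * (if 4 ∣ k then 1 - X ^ k else 1) *
        (if 8 ∣ k then (1 - X ^ k) ^ 2 else 1) := by
  have h := PowerSeries.inv_mul_cancel (1 - X ^ k : ℚ⟦X⟧) (by simp [zero_pow hk])
  by_cases h8 : 8 ∣ k
  · simp only [h8, (Nat.dvd_trans (by norm_num) h8 : 2 ∣ k),
      (Nat.dvd_trans (by norm_num) h8 : 4 ∣ k), if_true]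
    ring
  by_cases h4 : 4 ∣ k
  · have : (chiCoeff k).toNat = 0 := by unfold chiCoeff; omega
    simp only [h8, h4, (Nat.dvd_trans (by norm_num) h4 : 2 ∣ k), this, if_true, if_false]
    ring
  by_cases h2 : 2 ∣ k
  · have : (chiCoeff k).toNat = 1 := by unfold chiCoeff; omega
    simp only [h8, h4, h2, this, if_true, if_false]
    linear_combination (1 - X ^ k : ℚ⟦X⟧) * h
  · have : (chiCoeff k).toNat = 2 := by unfold chiCoeff; omega
    simp only [h8, h4, h2, this, if_false]
    linear_combination ((1 - X ^ k)⁻¹ * (1 - X ^ k : ℚ⟦X⟧) + 1) * h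

theorem chi_rhs_factor_mul_sq {s : ℕ} (hs : s ≠ 0) :
    (1 - X ^ (2 * s)) * (1 - X ^ (4 * s)) * (1 - X ^ (8 * s)) ^ 2 * ((1 - X ^ s)⁻¹) ^ 2 *
        (1 - X ^ s : ℚ⟦X⟧) ^ 2 =
      (1 - X ^ (2 * s)) * (1 - X ^ (4 * s)) * (1 - X ^ (8 * s)) ^ 2 := by
  have h := PowerSeries.inv_mul_cancel (1 - X ^ s : ℚ⟦X⟧) (by simp [zero_pow hs])
  linear_combination ((1 - X ^ (2 * s)) * (1 - X ^ (4 * s)) * (1 - X ^ (8 * s)) ^ 2 *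
    ((1 - X ^ s)⁻¹ * (1 - X ^ s : ℚ⟦X⟧) + 1)) * h

theorem coeff_chi_euler_product (n : ℕ) :
    coeff n (∏ k ∈ Icc 1 n,
        (if 8 ∣ k then (1 - X ^ k) ^ 2 else ((1 - X ^ k)⁻¹) ^ (chiCoeff k).toNat : ℚ⟦X⟧)) =
      coeff n (∏ s ∈ Icc 1 n, ((1 - X ^ (2 * s)) * (1 - X ^ (4 * s)) *
        (1 - X ^ (8 * s)) ^ 2 * ((1 - X ^ s)⁻¹) ^ 2 : ℚ⟦X⟧)) := by
  set π := Ideal.Quotient.mk (Ideal.span {(X : ℚ⟦X⟧) ^ (n + 1)})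
  have hπ1 : ∀ k, n < k → π (1 - X ^ k) = 1 := fun k hk => mk_span_X_pow_one_sub_X_pow hk
  have hπ2 : ∀ k, n < k → π ((1 - X ^ k) ^ 2) = 1 := fun k hk => by
    rw [map_pow, hπ1 k hk, one_pow]
  have hD : IsUnit (π (∏ k ∈ Icc 1 n, (1 - X ^ k) ^ 2)) :=
    (IsUnit.prod_iff.mpr fun k hk => (isUnit_one_sub_X_pow (by grind)).pow 2).map π
  apply coeff_eq_of_mk_span_X_pow_eq
  rw [← hD.mul_left_inj, ← map_mul, ← map_mul, ← prod_mul_distrib, ← prod_mul_distrib,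
    prod_congr rfl fun k hk => chi_lhs_factor_mul_sq (by grind),
    prod_congr rfl fun s hs => chi_rhs_factor_mul_sq (by grind)]
  simp only [prod_mul_distrib, ← prod_filter, map_mul]
  rw [mk_span_X_pow_prod_Icc_mul_left_eq_prod_filter_dvd two_pos (fun k => 1 - X ^ k) hπ1,
    mk_span_X_pow_prod_Icc_mul_left_eq_prod_filter_dvd four_pos (fun k => 1 - X ^ k) hπ1,
    mk_span_X_pow_prod_Icc_mul_left_eq_prod_filter_dvd (by norm_num) (fun k => (1 - X ^ k) ^ 2) hπ2]

/-- For ℰ^{(8)*}: the coefficients `a k` of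
`χ(t) = (2t+t²+2t³+2t⁵+t⁶+2t⁷−2t⁸)/(1−t⁸)` are periodic with period 8,
with `(a₁,…,a₈) = (2,1,2,0,2,1,2,−2)`, and they satisfy the Euler product
relation `∏_{k≥1}(1−t^k)^{−a k} = ∏_{s≥1}(1−t^{2s})(1−t^{4s})(1−t^{8s})²/(1−t^s)²`
(stated coefficientwise via truncated products: factors with index `> n` do not
affect the coefficient of `t^n`). -/
theorem stmt17 :
    let a : ℕ → ℤ := fun k =>
      if k % 8 = 0 then -2 else if k % 2 = 1 then 2
      else if k % 8 = 2 ∨ k % 8 = 6 then 1 else 0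
    ((PowerSeries.mk fun k => if k = 0 then (0 : ℚ) else (a k : ℚ)) *
        (1 - (X : ℚ⟦X⟧) ^ 8)
      = 2 * X + X ^ 2 + 2 * X ^ 3 + 2 * X ^ 5 + X ^ 6 + 2 * X ^ 7
          - 2 * X ^ 8) ∧
    (a 1 = 2 ∧ a 2 = 1 ∧ a 3 = 2 ∧ a 4 = 0 ∧ a 5 = 2 ∧ a 6 = 1 ∧ a 7 = 2 ∧
      a 8 = -2 ∧ ∀ k : ℕ, 1 ≤ k → a (k + 8) = a k) ∧
    (∀ n : ℕ,
      PowerSeries.coeff (R := ℚ) n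
          (∏ k ∈ Finset.Icc 1 n,
            (if 8 ∣ k then (1 - (X : ℚ⟦X⟧) ^ k) ^ 2
             else ((1 - (X : ℚ⟦X⟧) ^ k)⁻¹) ^ (a k).toNat))
        = PowerSeries.coeff (R := ℚ) n
          (∏ s ∈ Finset.Icc 1 n,
            ((1 - (X : ℚ⟦X⟧) ^ (2 * s)) * (1 - (X : ℚ⟦X⟧) ^ (4 * s)) *
              (1 - (X : ℚ⟦X⟧) ^ (8 * s)) ^ 2 *
              ((1 - (X : ℚ⟦X⟧) ^ s)⁻¹) ^ 2))) := by
  intro a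
  refine ⟨?_, ⟨rfl, rfl, rfl, rfl, rfl, rfl, rfl, rfl, fun k _ => chiCoeff_add_eight k⟩,
    coeff_chi_euler_product⟩
  rw [mk_mul_one_sub_X_pow (by simp) fun k hk => by
    rw [if_neg (by omega), if_neg (by omega)]
    exact congrArg _ (chiCoeff_add_eight k)]
  exact trunc_mk_chiCoeff
end
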